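/- Let n be a non-negative integer and let λ be a complex number such that λ + 1/2 is not equal to any of 1, 2, …, n. Then 4^n · C(λ, n) = C(2λ, n) · ∑_{k=0}^{n} C(n,k) · C(n−λ−1/2, k)/C(k−λ−1/2, k). -/

import Mathlib

open Finset

/-- Generalized binomial coefficient `C(z,k) = z(z-1)⋯(z-k+1)/k!`. -/
noncomputable def cchoose (z : ℂ) (k : ℕ) : ℂ :=
  (∏ i ∈ Finset.range k, (z - i)) / (k.factorial : ℂ)

/-! Put `μ = λ + 1/2`. Upper negation `C(-r, k) = (-1)^k C(r + k - 1, k)` and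
`C(n, k) C(x, n) = C(x, k) C(x - k, n - k)` turn each summand, multiplied by `C(μ - 1, n)`, into
`M(μ - n, k) M(μ - n, n - k)` with `M(a, k) = C(a + k - 1, k)`, so Chu–Vandermonde sums it to
`C(2λ - n, n)`. It remains that
`C(2λ, n) C(2λ - n, n) = C(2n, n) C(2λ, 2n) = 4^n C(λ, n) C(λ - 1/2, n)`, the last step being
the duplication `∏_{i<2n} (2z - i) = 4^n ∏_{i<n} (z - i)(z - 1/2 - i)`. -/

theorem prod_range_two_mul_sub {K : Type*} [Field K] [NeZero (2 : K)] (z : K) (n : ℕ) :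
    ∏ i ∈ range (2 * n), (2 * z - i) =
      4 ^ n * ((∏ i ∈ range n, (z - i)) * ∏ i ∈ range n, (z - 1 / 2 - i)) := by
  induction n with
  | zero => simp
  | succ n ih =>
    rw [show 2 * (n + 1) = 2 * n + 1 + 1 by ring, prod_range_succ, prod_range_succ, ih,
      prod_range_succ, prod_range_succ]
    push_cast
    field_simp
    ring

namespace Ring

theorem choose_eq_prod_range_div {K : Type*} [Field K] [CharZero K] (a : K) (n : ℕ) :
    choose a n = (∏ j ∈ range n, (a - j)) / n.factorial := by
  rw [choose_eq_smul, ← Polynomial.aeval_eq_smeval, Polynomial.aeval_def, ← Polynomial.eval_map,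
    descPochhammer_map, descPochhammer_eval_eq_prod_range, smul_eq_mul, inv_mul_eq_div]

theorem choose_ne_zero {K : Type*} [Field K] [CharZero K] {a : K} {n : ℕ}
    (h : ∀ j < n, a ≠ j) : choose a n ≠ 0 := by
  rw [choose_eq_prod_range_div]
  refine div_ne_zero (prod_ne_zero_iff.mpr fun j hj => sub_ne_zero.mpr (h j (mem_range.mp hj))) ?_
  exact_mod_cast n.factorial_ne_zero

section CommRing

variable {R : Type*} [CommRing R] [BinomialRing R]

theorem choose_neg_eq_neg_one_pow_mul (r : R) (n : ℕ) :
    choose (-r) n = (-1) ^ n * multichoose r n := by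
  rw [choose_neg', Units.smul_def, Int.coe_negOnePow_natCast, zsmul_eq_mul, Int.cast_pow,
    Int.cast_neg, Int.cast_one]

theorem multichoose_add (a b : R) (n : ℕ) :
    multichoose (a + b) n = ∑ ij ∈ antidiagonal n, multichoose a ij.1 * multichoose b ij.2 := by
  have h := add_choose_eq n (Commute.all (-a) (-b))
  rw [← neg_add] at h
  simp only [choose_neg_eq_neg_one_pow_mul] at h
  refine ((isUnit_neg_one.pow n).mul_left_cancel (h.trans ?_))
  rw [mul_sum]
  refine sum_congr rfl fun ij hij => ?_
  rw [← mem_antidiagonal.mp hij, pow_add]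
  ring

end CommRing

theorem choose_mul_choose_sub_div_choose_sub {K : Type*} [Field K] [CharZero K] {μ : K}
    {n k : ℕ} (hk : k ≤ n) (hμ : choose (μ - 1) k ≠ 0) :
    n.choose k * choose (n - μ) k / choose (k - μ) k * choose (μ - 1) n =
      multichoose (μ - n) k * multichoose (μ - n) (n - k) := by
  have h_num : choose ((n : K) - μ) k = (-1) ^ k * multichoose (μ - n) k := by
    rw [← neg_sub, choose_neg_eq_neg_one_pow_mul]
  have h_den : choose ((k : K) - μ) k = (-1) ^ k * choose (μ - 1) k := by
    rw [← neg_sub, choose_neg_eq_neg_one_pow_mul, multichoose_eq, sub_add_cancel]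
  have h_split : (n.choose k : K) * choose (μ - 1) n =
      choose (μ - 1) k * multichoose (μ - n) (n - k) := by
    rw [← nsmul_eq_mul, choose_smul_choose (μ - 1) hk]
    congr 1
    rw [choose, Nat.cast_sub hk]
    ring_nf
  rw [h_num, h_den, div_mul_eq_mul_div, div_eq_iff (mul_ne_zero (pow_ne_zero _ (by norm_num)) hμ),
    mul_right_comm, h_split]
  ring

theorem central_choose_mul_choose_two_mul {K : Type*} [Field K] [CharZero K] (z : K) (n : ℕ) :
    ((2 * n).choose n : K) * choose (2 * z) (2 * n) =
      4 ^ n * choose z n * choose (z - 1 / 2) n := by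
  rw [Nat.cast_choose K (by omega : n ≤ 2 * n), show 2 * n - n = n by omega]
  simp only [choose_eq_prod_range_div, prod_range_two_mul_sub]
  have := (2 * n).factorial_ne_zero
  have := n.factorial_ne_zero
  field_simp

end Ring

theorem cchoose_eq_choose (z : ℂ) (k : ℕ) : cchoose z k = Ring.choose z k :=
  (Ring.choose_eq_prod_range_div z k).symm

theorem stmt_4 (n : ℕ) (l : ℂ)
    (hl : ∀ i : ℕ, 1 ≤ i → i ≤ n → l + 1 / 2 ≠ (i : ℂ)) :
    (4 : ℂ) ^ n * cchoose l n =
      cchoose (2 * l) n * ∑ k ∈ range (n + 1), (n.choose k : ℂ) *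
        cchoose ((n : ℂ) - l - 1 / 2) k / cchoose ((k : ℂ) - l - 1 / 2) k := by
  simp only [cchoose_eq_choose, sub_sub]
  set μ := l + 1 / 2
  have hμ : ∀ k ≤ n, Ring.choose (μ - 1) k ≠ 0 := fun k hk =>
    Ring.choose_ne_zero fun j hj h =>
      hl (j + 1) (by omega) (by omega) (by push_cast; linear_combination h)
  have h_sum : (∑ k ∈ range (n + 1), (n.choose k : ℂ) * Ring.choose (n - μ) k /
      Ring.choose (k - μ) k) * Ring.choose (μ - 1) n = Ring.choose (2 * l - n) n := by
    rw [sum_mul, sum_congr rfl fun k hk => Ring.choose_mul_choose_sub_div_choose_sub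
      (mem_range_succ_iff.mp hk) (hμ k (mem_range_succ_iff.mp hk)),
      ← Nat.sum_antidiagonal_eq_sum_range_succ (fun i j => Ring.multichoose (μ - n) i *
        Ring.multichoose (μ - n) j), ← Ring.multichoose_add, Ring.multichoose_eq]
    congr 1
    ring
  have h_split := Ring.choose_smul_choose (2 * l) (by omega : n ≤ 2 * n)
  rw [nsmul_eq_mul, Ring.central_choose_mul_choose_two_mul, show 2 * n - n = n by omega] at h_split
  refine mul_right_cancel₀ (hμ n le_rfl) ?_
  calc 4 ^ n * Ring.choose l n * Ring.choose (μ - 1) n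
      = Ring.choose (2 * l) n * Ring.choose (2 * l - n) n := by
        rw [← h_split, show μ - 1 = l - 1 / 2 by ring]
    _ = _ := by rw [mul_assoc, h_sum]
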